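/- Let (M,∂) be a bounded nonnegatively Z-graded complex of finite dimensional vector spaces over a field k of characteristic zero, and let t be a perturbation raising degree by odd amounts ≥ 3 with (∂+t)² = 0. Then dim H_ev(M,∂+t) + dim H_od(M,∂+t) ≤ Σ_i dim H^i(M,∂), i.e., the total dimension of the twisted cohomology is at most the total dimension of the untwisted cohomology. -/
import Mathlib

open Module Submodule

/-- Cohomology of `D` "from `Q` to `P`": the kernel of `D` restricted to the
graded piece `P`, modulo the image under `D` of the graded piece `Q`. -/
abbrev Htw {k V : Type*} [Field k] [AddCommGroup V] [Module k V]
    (D : V →ₗ[k] V) (P Q : Submodule k V) : Type _ :=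
  ↥(LinearMap.ker D ⊓ P) ⧸
    (Submodule.comap (LinearMap.ker D ⊓ P).subtype (Q.map D))

/-- The even part `⊕_i M^{2i}` of a graded module. -/
abbrev Vev {k V : Type*} [Field k] [AddCommGroup V] [Module k V]
    (𝒜 : ℕ → Submodule k V) : Submodule k V := ⨆ i, 𝒜 (2 * i)

/-- The odd part `⊕_i M^{2i+1}` of a graded module. -/
abbrev Vod {k V : Type*} [Field k] [AddCommGroup V] [Module k V]
    (𝒜 : ℕ → Submodule k V) : Submodule k V := ⨆ i, 𝒜 (2 * i + 1)

section Aux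

set_option linter.unusedSectionVars false

variable {k V W : Type*} [Field k] [AddCommGroup V] [Module k V] [FiniteDimensional k V]
  [AddCommGroup W] [Module k W]

/-- rank-nullity for a map restricted to a submodule -/
lemma stmt5.rank_null (D : V →ₗ[k] W) (P : Submodule k V) :
    finrank k ↥(LinearMap.ker D ⊓ P) + finrank k ↥(P.map D) = finrank k ↥P := by
  have h := LinearMap.finrank_range_add_finrank_ker (D ∘ₗ P.subtype)
  have hr : LinearMap.range (D ∘ₗ P.subtype) = P.map D := by
    rw [LinearMap.range_comp, Submodule.range_subtype]
  have hk : LinearMap.ker (D ∘ₗ P.subtype) = comap P.subtype (LinearMap.ker D ⊓ P) := by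
    rw [LinearMap.ker_comp, Submodule.comap_inf]
    simp [Submodule.comap_subtype_self]
  rw [hr, hk] at h
  rw [← h, (Submodule.comapSubtypeEquivOfLe (inf_le_right :
      LinearMap.ker D ⊓ P ≤ P)).finrank_eq]
  ring

lemma stmt5.map_add_le' (f g : V →ₗ[k] V) (P : Submodule k V) :
    P.map (f + g) ≤ P.map f ⊔ P.map g := by
  rintro x ⟨y, hy, rfl⟩
  exact add_mem_sup ⟨y, hy, rfl⟩ ⟨y, hy, rfl⟩

lemma stmt5.finrank_sup_le' (a b : Submodule k V) :
    finrank k ↥(a ⊔ b) ≤ finrank k ↥a + finrank k ↥b := by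
  have := Submodule.finrank_sup_add_finrank_inf_eq a b
  omega

lemma stmt5.finrank_Htw_add (D : V →ₗ[k] V) (P Q : Submodule k V)
    (h : Q.map D ≤ LinearMap.ker D ⊓ P) :
    finrank k (Htw D P Q) + finrank k ↥(Q.map D)
      = finrank k ↥(LinearMap.ker D ⊓ P) := by
  have h1 := Submodule.finrank_quotient_add_finrank
    (Submodule.comap (LinearMap.ker D ⊓ P).subtype (Q.map D))
  rw [(Submodule.comapSubtypeEquivOfLe h).finrank_eq] at h1
  exact h1

lemma stmt5.finrank_Htw_of_disj (D : V →ₗ[k] V) (P Q : Submodule k V)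
    (h : Q.map D ⊓ (LinearMap.ker D ⊓ P) = ⊥) :
    finrank k (Htw D P Q) = finrank k ↥(LinearMap.ker D ⊓ P) := by
  have hc : Submodule.comap (LinearMap.ker D ⊓ P).subtype (Q.map D) = ⊥ := by
    rw [eq_bot_iff]
    rintro ⟨x, hx⟩ hmem
    have : x ∈ Q.map D ⊓ (LinearMap.ker D ⊓ P) := ⟨hmem, hx⟩
    rw [h] at this
    simpa using this
  have h1 := Submodule.finrank_quotient_add_finrank
    (Submodule.comap (LinearMap.ker D ⊓ P).subtype (Q.map D))
  have h2 : finrank k ↥(Submodule.comap (LinearMap.ker D ⊓ P).subtype (Q.map D)) = 0 :=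
    Submodule.finrank_eq_zero.mpr hc
  rw [h2, add_zero] at h1
  exact h1

/-- the filtration `F_p = ⊕_{i ≥ p} 𝒜_i` -/
def stmt5.Flt (𝒜 : ℕ → Submodule k V) (p : ℕ) : Submodule k V := ⨆ i, 𝒜 (p + i)

namespace stmt5

variable (𝒜 : ℕ → Submodule k V)

lemma le_Flt {j p : ℕ} (h : p ≤ j) : 𝒜 j ≤ Flt 𝒜 p := by
  have hj : j = p + (j - p) := by omega
  rw [hj]
  exact le_iSup (fun i => 𝒜 (p + i)) (j - p)

lemma Flt_succ_le (p : ℕ) : Flt 𝒜 (p + 1) ≤ Flt 𝒜 p :=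
  iSup_le fun i => le_Flt 𝒜 (by omega)

lemma disj_Flt (hind : iSupIndep 𝒜) (q : ℕ) : Disjoint (𝒜 q) (Flt 𝒜 (q + 1)) := by
  refine (hind q).mono_right (iSup_le fun i => ?_)
  exact le_iSup₂ (f := fun (j : ℕ) (_ : j ≠ q) => 𝒜 j) (q + 1 + i) (by omega)

variable {𝒜} in
lemma mapD_Flt (d t : V →ₗ[k] V)
    (hd : ∀ i, (𝒜 i).map d ≤ 𝒜 (i + 1))
    (ht : ∀ i, (𝒜 i).map t ≤ ⨆ j : ℕ, 𝒜 (i + 2 * j + 3)) (p : ℕ) :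
    (Flt 𝒜 p).map (d + t) ≤ Flt 𝒜 (p + 1) := by
  refine le_trans (map_add_le' d t _) (sup_le ?_ ?_)
  · rw [Flt, Submodule.map_iSup]
    exact iSup_le fun i => le_trans (hd _) (le_Flt 𝒜 (by omega))
  · rw [Flt, Submodule.map_iSup]
    refine iSup_le fun i => le_trans (ht _) (iSup_le fun j => le_Flt 𝒜 (by omega))

variable {𝒜} in
/-- the key inequality: the rank of the perturbed differential dominates the
rank of the graded differential -/
lemma key (hind : iSupIndep 𝒜) (N : ℕ) (d t : V →ₗ[k] V)
    (hd : ∀ i, (𝒜 i).map d ≤ 𝒜 (i + 1))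
    (ht : ∀ i, (𝒜 i).map t ≤ ⨆ j : ℕ, 𝒜 (i + 2 * j + 3)) :
    ∀ m p, N + 1 ≤ p + m →
      ∑ i ∈ Finset.Ico p (N + 1), finrank k ↥((𝒜 i).map d)
        ≤ finrank k ↥((Flt 𝒜 p).map (d + t)) := by
  intro m
  induction m with
  | zero =>
    intro p hp
    rw [Finset.Ico_eq_empty (by omega), Finset.sum_empty]
    exact Nat.zero_le _
  | succ m ih =>
    intro p hp
    by_cases hpN : N + 1 ≤ p
    · rw [Finset.Ico_eq_empty (by omega), Finset.sum_empty]
      exact Nat.zero_le _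
    push_neg at hpN
    rw [Finset.sum_eq_sum_Ico_succ_bot (by omega)]
    have IH := ih (p + 1) (by omega)
    set X := (Flt 𝒜 p).map (d + t) with hX
    set π := (Flt 𝒜 (p + 2)).mkQ with hπ
    -- the next filtration step sits inside ker π ⊓ X
    have h1 : (Flt 𝒜 (p + 1)).map (d + t) ≤ LinearMap.ker π ⊓ X := by
      refine le_inf ?_ (Submodule.map_mono (Flt_succ_le 𝒜 p))
      rw [hπ, Submodule.ker_mkQ]
      exact mapD_Flt d t hd ht (p + 1)
    have h2 := rank_null π X
    have h3 : finrank k ↥((Flt 𝒜 (p + 1)).map (d + t)) ≤ finrank k ↥(LinearMap.ker π ⊓ X) :=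
      Submodule.finrank_mono h1
    -- the image of `map d (𝒜 p)` under π is inside `X.map π` and has full rank
    have htp : ∀ x ∈ 𝒜 p, t x ∈ Flt 𝒜 (p + 2) := by
      intro x hx
      exact le_trans (ht p) (iSup_le fun j => le_Flt 𝒜 (by omega)) ⟨x, hx, rfl⟩
    have hEq : ((𝒜 p).map (d + t)).map π = ((𝒜 p).map d).map π := by
      apply le_antisymm
      · rintro _ ⟨_, ⟨x, hx, rfl⟩, rfl⟩
        have hzero : π (t x) = 0 := by
          rw [hπ, Submodule.mkQ_apply, Submodule.Quotient.mk_eq_zero]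
          exact htp x hx
        have : π ((d + t) x) = π (d x) := by
          rw [LinearMap.add_apply, map_add, hzero, add_zero]
        rw [this]
        exact ⟨d x, ⟨x, hx, rfl⟩, rfl⟩
      · rintro _ ⟨_, ⟨x, hx, rfl⟩, rfl⟩
        have hzero : π (t x) = 0 := by
          rw [hπ, Submodule.mkQ_apply, Submodule.Quotient.mk_eq_zero]
          exact htp x hx
        have : π (d x) = π ((d + t) x) := by
          rw [LinearMap.add_apply, map_add, hzero, add_zero]
        rw [this]
        exact ⟨(d + t) x, ⟨x, hx, rfl⟩, rfl⟩
    have h4 : ((𝒜 p).map d).map π ≤ X.map π := by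
      rw [← hEq]
      exact Submodule.map_mono (Submodule.map_mono (le_Flt 𝒜 le_rfl))
    have h5 : finrank k ↥(((𝒜 p).map d).map π) = finrank k ↥((𝒜 p).map d) := by
      have hdisj : LinearMap.ker π ⊓ (𝒜 p).map d = ⊥ := by
        rw [hπ, Submodule.ker_mkQ]
        rw [inf_comm]
        have hd2 : Disjoint ((𝒜 p).map d) (Flt 𝒜 (p + 1 + 1)) :=
          (disj_Flt 𝒜 hind (p + 1)).mono_left (hd p)
        rw [show p + 1 + 1 = p + 2 by omega] at hd2
        exact disjoint_iff.mp hd2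
      have := rank_null π ((𝒜 p).map d)
      rw [hdisj, finrank_bot, zero_add] at this
      exact this
    have h6 : finrank k ↥((𝒜 p).map d) ≤ finrank k ↥(X.map π) := by
      rw [← h5]
      exact Submodule.finrank_mono h4
    omega

end stmt5

end Aux

/-- For a bounded nonnegatively graded complex `(M, d)` of finite
dimensional vector spaces over a field of characteristic zero, with a perturbation
`t` raising degree by odd amounts `≥ 3` and `(d+t)² = 0`, the total dimension of
the twisted cohomology is at most the total dimension of the untwisted one. -/
theorem stmt5 {k V : Type*} [Field k] [CharZero k]
    [AddCommGroup V] [Module k V] [FiniteDimensional k V]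
    (𝒜 : ℕ → Submodule k V) (hint : DirectSum.IsInternal 𝒜)
    (N : ℕ) (hbd : ∀ i, N < i → 𝒜 i = ⊥)
    (d t : V →ₗ[k] V)
    (hd : ∀ i, (𝒜 i).map d ≤ 𝒜 (i + 1)) (hdd : d ∘ₗ d = 0)
    (ht : ∀ i, (𝒜 i).map t ≤ ⨆ j : ℕ, 𝒜 (i + 2 * j + 3))
    (hD : (d + t) ∘ₗ (d + t) = 0) :
    finrank k (Htw (d + t) (Vev 𝒜) (Vod 𝒜))
        + finrank k (Htw (d + t) (Vod 𝒜) (Vev 𝒜))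
      ≤ ∑ i ∈ Finset.range (N + 1), finrank k (Htw d (𝒜 i) (𝒜 (i - 1))) := by
  have hind : iSupIndep 𝒜 := hint.submodule_iSupIndep
  -- images lie in kernels
  have hDker : ∀ Q : Submodule k V, Q.map (d + t) ≤ LinearMap.ker (d + t) := by
    rintro Q x ⟨y, hy, rfl⟩
    simp only [LinearMap.mem_ker]
    have : ((d + t) ∘ₗ (d + t)) y = 0 := by rw [hD]; rfl
    simpa using this
  have hdker : ∀ Q : Submodule k V, Q.map d ≤ LinearMap.ker d := by
    rintro Q x ⟨y, hy, rfl⟩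
    simp only [LinearMap.mem_ker]
    have : (d ∘ₗ d) y = 0 := by rw [hdd]; rfl
    simpa using this
  -- parity of the total differential
  have hOd : (Vev 𝒜).map (d + t) ≤ Vod 𝒜 := by
    refine le_trans (stmt5.map_add_le' d t _) (sup_le ?_ ?_)
    · rw [Vev, Submodule.map_iSup]
      refine iSup_le fun i => le_trans (hd _) ?_
      exact le_iSup (fun i => 𝒜 (2 * i + 1)) i
    · rw [Vev, Submodule.map_iSup]
      refine iSup_le fun i => le_trans (ht _) (iSup_le fun j => ?_)
      have : 2 * i + 2 * j + 3 = 2 * (i + j + 1) + 1 := by omega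
      rw [this]
      exact le_iSup (fun i => 𝒜 (2 * i + 1)) (i + j + 1)
  have hEv : (Vod 𝒜).map (d + t) ≤ Vev 𝒜 := by
    refine le_trans (stmt5.map_add_le' d t _) (sup_le ?_ ?_)
    · rw [Vod, Submodule.map_iSup]
      refine iSup_le fun i => le_trans (hd _) ?_
      have : 2 * i + 1 + 1 = 2 * (i + 1) := by omega
      rw [this]
      exact le_iSup (fun i => 𝒜 (2 * i)) (i + 1)
    · rw [Vod, Submodule.map_iSup]
      refine iSup_le fun i => le_trans (ht _) (iSup_le fun j => ?_)
      have : 2 * i + 1 + 2 * j + 3 = 2 * (i + j + 2) := by omega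
      rw [this]
      exact le_iSup (fun i => 𝒜 (2 * i)) (i + j + 2)
  -- left-hand side bookkeeping
  have A1 := stmt5.finrank_Htw_add (d + t) (Vev 𝒜) (Vod 𝒜) (le_inf (hDker _) hEv)
  have A2 := stmt5.finrank_Htw_add (d + t) (Vod 𝒜) (Vev 𝒜) (le_inf (hDker _) hOd)
  have B1 := stmt5.rank_null (d + t) (Vev 𝒜)
  have B2 := stmt5.rank_null (d + t) (Vod 𝒜)
  -- (i) the sum of the dimensions of the even and odd parts is at most ∑ dim 𝒜ᵢ
  have hsupsum : ∀ s : Finset ℕ, finrank k ↥(s.sup 𝒜) ≤ ∑ i ∈ s, finrank k ↥(𝒜 i) := by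
    intro s
    induction s using Finset.cons_induction with
    | empty => simp
    | cons a s ha ih =>
      rw [Finset.sup_cons, Finset.sum_cons]
      exact le_trans (stmt5.finrank_sup_le' _ _) (by omega)
  have hCev : finrank k ↥(Vev 𝒜)
      ≤ ∑ i ∈ (Finset.range (N + 1)).filter (fun i => Even i), finrank k ↥(𝒜 i) := by
    refine le_trans (Submodule.finrank_mono (iSup_le fun i => ?_)) (hsupsum _)
    by_cases hi : 2 * i ≤ N
    · exact Finset.le_sup (Finset.mem_filter.mpr ⟨Finset.mem_range.mpr (by omega), ⟨i, by omega⟩⟩)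
    · rw [hbd (2 * i) (by omega)]; exact bot_le
  have hCod : finrank k ↥(Vod 𝒜)
      ≤ ∑ i ∈ (Finset.range (N + 1)).filter (fun i => ¬ Even i), finrank k ↥(𝒜 i) := by
    refine le_trans (Submodule.finrank_mono (iSup_le fun i => ?_)) (hsupsum _)
    by_cases hi : 2 * i + 1 ≤ N
    · refine Finset.le_sup (Finset.mem_filter.mpr ⟨Finset.mem_range.mpr (by omega), ?_⟩)
      exact Nat.not_even_iff_odd.mpr ⟨i, rfl⟩
    · rw [hbd (2 * i + 1) (by omega)]; exact bot_le
  have hC : finrank k ↥(Vev 𝒜) + finrank k ↥(Vod 𝒜)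
      ≤ ∑ i ∈ Finset.range (N + 1), finrank k ↥(𝒜 i) := by
    have := Finset.sum_filter_add_sum_filter_not (Finset.range (N + 1))
      (fun i => Even i) (fun i => finrank k ↥(𝒜 i))
    omega
  -- (ii) the rank of the perturbed differential dominates ∑ dim (d 𝒜ᵢ)
  have htop : Vev 𝒜 ⊔ Vod 𝒜 = ⊤ := by
    rw [eq_top_iff, ← hint.submodule_iSup_eq_top]
    refine iSup_le fun i => ?_
    rcases Nat.even_or_odd i with ⟨m, hm⟩ | ⟨m, hm⟩
    · refine le_trans ?_ le_sup_left
      rw [show i = 2 * m by omega]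
      exact le_iSup (fun i => 𝒜 (2 * i)) m
    · refine le_trans ?_ le_sup_right
      rw [show i = 2 * m + 1 by omega]
      exact le_iSup (fun i => 𝒜 (2 * i + 1)) m
  have hFlt0 : stmt5.Flt 𝒜 0 = ⊤ := by
    rw [eq_top_iff, ← hint.submodule_iSup_eq_top]
    exact iSup_le fun i => stmt5.le_Flt 𝒜 (Nat.zero_le i)
  have hkey := stmt5.key hind N d t hd ht (N + 1) 0 (by omega)
  rw [hFlt0, ← htop, Submodule.map_sup, ← Finset.range_eq_Ico] at hkey
  have hD2 : ∑ i ∈ Finset.range (N + 1), finrank k ↥((𝒜 i).map d)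
      ≤ finrank k ↥((Vev 𝒜).map (d + t)) + finrank k ↥((Vod 𝒜).map (d + t)) :=
    le_trans hkey (stmt5.finrank_sup_le' _ _)
  -- right-hand side bookkeeping
  have R0 : finrank k (Htw d (𝒜 0) (𝒜 (0 - 1)))
      = finrank k ↥(LinearMap.ker d ⊓ 𝒜 0) := by
    refine stmt5.finrank_Htw_of_disj d (𝒜 0) (𝒜 0) ?_
    rw [eq_bot_iff]
    refine le_trans (inf_le_inf (hd 0) inf_le_right) ?_
    rw [← eq_bot_iff, ← disjoint_iff]
    exact hind.pairwiseDisjoint (show (1 : ℕ) ≠ 0 by omega)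
  have Ri : ∀ i : ℕ, finrank k (Htw d (𝒜 (i + 1)) (𝒜 (i + 1 - 1))) + finrank k ↥((𝒜 i).map d)
      = finrank k ↥(LinearMap.ker d ⊓ 𝒜 (i + 1)) :=
    fun i => stmt5.finrank_Htw_add d (𝒜 (i + 1)) (𝒜 i) (le_inf (hdker _) (hd i))
  have RN : ∀ i : ℕ, finrank k ↥(LinearMap.ker d ⊓ 𝒜 i) + finrank k ↥((𝒜 i).map d)
      = finrank k ↥(𝒜 i) := fun i => stmt5.rank_null d (𝒜 i)
  have rN : finrank k ↥((𝒜 N).map d) = 0 := by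
    refine Submodule.finrank_eq_zero.mpr (le_bot_iff.mp ?_)
    rw [← hbd (N + 1) (by omega)]
    exact hd N
  -- the summed identity
  have SI : ∀ M : ℕ,
      ∑ i ∈ Finset.range (M + 1), finrank k (Htw d (𝒜 i) (𝒜 (i - 1)))
        + ∑ i ∈ Finset.range (M + 1), finrank k ↥((𝒜 i).map d)
        + ∑ i ∈ Finset.range M, finrank k ↥((𝒜 i).map d)
      = ∑ i ∈ Finset.range (M + 1), finrank k ↥(𝒜 i) := by
    intro M
    induction M with
    | zero =>
      have h0 := R0
      have h1 := RN 0
      simp only [zero_add, Finset.range_one, Finset.sum_singleton, Finset.range_zero,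
        Finset.sum_empty, add_zero, Nat.zero_sub] at h0 ⊢
      omega
    | succ M ihM =>
      have h1 := Ri M
      have h2 := RN (M + 1)
      have e1 := Finset.sum_range_succ (fun i => finrank k (Htw d (𝒜 i) (𝒜 (i - 1)))) (M + 1)
      have e2 := Finset.sum_range_succ (fun i => finrank k ↥((𝒜 i).map d)) (M + 1)
      have e3 := Finset.sum_range_succ (fun i => finrank k ↥((𝒜 i).map d)) M
      have e4 := Finset.sum_range_succ (fun i => finrank k ↥(𝒜 i)) (M + 1)
      omega
  have SIN := SI N
  have hrsum : ∑ i ∈ Finset.range (N + 1), finrank k ↥((𝒜 i).map d)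
      = ∑ i ∈ Finset.range N, finrank k ↥((𝒜 i).map d) := by
    rw [Finset.sum_range_succ, rN, add_zero]
  omega
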